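/- For every n ≥ 1 there exists a polynomial p_n with integer coefficients in 2(n−1) variables, depending only on n, with the following property: for every sequence ζ = (ζ_k)_{k≥1} of complex numbers and every N ≥ n, the coefficient of zⁿ in the Taylor expansion at 0 of the quotient c_N/d_N (which is well defined near 0, since d_N(0) = Π_{k=1}^{N}(1+|ζ_k|²)^{-1/2} > 0) equals −conj(ζ_n)·Π_{j=1}^{n−1}(1+|ζ_j|²) + p_n(ζ₁, conj(ζ₁), …, ζ_{n−1}, conj(ζ_{n−1})). In particular this coefficient is independent of N for N ≥ n and independent of ζ_n₊₁, ζ_n₊₂, …, except through the displayed leading term. -/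

import Mathlib

open Polynomial

/-- The pair of polynomials `(c_N, d_N)`: `c_0 = 0`, `d_0 = 1`, and for `N ≥ 1`,
`c_N = (1+|ζ_N|²)^{-1/2} (c_{N-1} − conj(ζ_N) ∑_k conj((d_{N-1})_k) z^{N-k})`,
`d_N = (1+|ζ_N|²)^{-1/2} (d_{N-1} + conj(ζ_N) ∑_k conj((c_{N-1})_k) z^{N-k})`. -/
noncomputable def cdPair (ζ : ℕ → ℂ) : ℕ → Polynomial ℂ × Polynomial ℂ
  | 0 => (0, 1)
  | (N + 1) =>
    let c := (cdPair ζ N).1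
    let d := (cdPair ζ N).2
    let a : ℂ := ((Real.sqrt (1 + ‖ζ (N + 1)‖ ^ 2))⁻¹ : ℝ)
    (Polynomial.C a * (c - Polynomial.C (starRingEnd ℂ (ζ (N + 1))) *
        ∑ k ∈ Finset.range (N + 1),
          Polynomial.C (starRingEnd ℂ (d.coeff k)) * Polynomial.X ^ (N + 1 - k)),
     Polynomial.C a * (d + Polynomial.C (starRingEnd ℂ (ζ (N + 1))) *
        ∑ k ∈ Finset.range (N + 1),
          Polynomial.C (starRingEnd ℂ (c.coeff k)) * Polynomial.X ^ (N + 1 - k)))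

/-! Write `p* := X^N · p̄(1/X)` (`(p.map conj).reflect N`) for the conjugate reciprocal of a
polynomial of degree `≤ N`. The step `(c, d) ↦ (c - z X d*, d + z X c*)` multiplies
`c c* + d d*` by `(1 + |z|²) X`, so with the normalisation `a_N = (1 + |ζ_N|²)^{-1/2}` we get
`c_N c_N* + d_N d_N* = X^N`. Consequently `c_{N+1} d_N - c_N d_{N+1} = -a_{N+1} ζ̄_{N+1} X^{N+1}`,
i.e. `c_{N+1}/d_{N+1} - c_N/d_N = O(X^{N+1})`, with leading coefficient
`-ζ̄_{N+1} / d_N(0)² = -ζ̄_{N+1} ∏_{j ≤ N} (1 + |ζ_j|²)`. Hence the `n`-th coefficient does not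
change from `N = n` on, and it is that of `c_{n-1}/d_{n-1}` plus the leading term.

Up to the scalar `d_N(0) = a_1 ⋯ a_N`, the pair `(c_N, d_N)` is the image of the same recursion
run over `ℤ[ζ_j, ζ̄_j]` (with the conjugation swapping `ζ_j` and `ζ̄_j`), whose denominator has
constant term `1`; inverting it there shows that the `n`-th coefficient of `c_{n-1}/d_{n-1}` is
an integer polynomial in `ζ_j, ζ̄_j`, `j < n`. -/

open ComplexConjugate

namespace Polynomial

variable {R : Type*} [CommRing R]

theorem reflect_eq_sum_range {N : ℕ} {p : R[X]} (hp : p.natDegree ≤ N) :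
    p.reflect N = ∑ k ∈ Finset.range (N + 1), C (p.coeff k) * X ^ (N - k) := by
  ext i
  simp only [coeff_reflect, finsetSum_coeff, coeff_C_mul_X_pow]
  by_cases hi : i ≤ N
  · rw [revAt_le hi, Finset.sum_eq_single (N - i) (fun k hk hki => if_neg (by grind))
      (by grind), if_pos (by omega)]
  · rw [revAt_eq_self_of_lt (by omega), coeff_eq_zero_of_natDegree_lt (by omega),
      Finset.sum_eq_zero (fun k hk => if_neg (by grind))]

theorem sum_range_map_coeff_mul_X_pow_eq {S : Type*} [CommRing S] (f : R →+* S) {N : ℕ} {p : R[X]}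
    (hp : p.natDegree ≤ N) :
    ∑ k ∈ Finset.range (N + 1), C (f (p.coeff k)) * X ^ (N + 1 - k)
      = X * (p.map f).reflect N := by
  rw [reflect_eq_sum_range (natDegree_map_le.trans hp), Finset.mul_sum]
  refine Finset.sum_congr rfl fun k hk => ?_
  rw [coeff_map, Nat.succ_sub (Nat.lt_succ_iff.1 (Finset.mem_range.1 hk)), pow_succ]
  ring

theorem reflect_succ {N : ℕ} {p : R[X]} (hp : p.natDegree ≤ N) :
    p.reflect (N + 1) = X * p.reflect N := by
  simpa [add_comm 1 N] using reflect_mul (1 : R[X]) p (F := 1) (by simp) hp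

theorem reflect_X_mul_succ {N : ℕ} {p : R[X]} (hp : p.natDegree ≤ N) :
    (X * p).reflect (N + 1) = p.reflect N := by
  simpa [add_comm 1 N] using reflect_mul (X : R[X]) p (F := 1) natDegree_X_le hp

theorem natDegree_reflect_le_of_le {N : ℕ} {p : R[X]} (hp : p.natDegree ≤ N) :
    (p.reflect N).natDegree ≤ N :=
  natDegree_reflect_le.trans (max_le le_rfl hp)

end Polynomial

namespace PowerSeries

theorem mul_inv_sub_mul_inv {k : Type*} [Field k] {c d c' d' : PowerSeries k}
    (hd : constantCoeff d ≠ 0) (hd' : constantCoeff d' ≠ 0) :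
    c' * d'⁻¹ - c * d⁻¹ = (c' * d - c * d') * (d⁻¹ * d'⁻¹) := by
  linear_combination c * d⁻¹ * PowerSeries.mul_inv_cancel d' hd'
    - c' * d'⁻¹ * PowerSeries.mul_inv_cancel d hd

theorem inv_map_eq_map_invOfUnit {R k : Type*} [CommRing R] [Field k] (f : R →+* k)
    {Q : PowerSeries R} (hQ : constantCoeff Q = 1) :
    (PowerSeries.map f Q)⁻¹ = PowerSeries.map f (invOfUnit Q 1) := by
  have hfQ : constantCoeff (PowerSeries.map f Q) ≠ 0 := by
    rw [← coeff_zero_eq_constantCoeff_apply, coeff_map, coeff_zero_eq_constantCoeff_apply, hQ,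
      map_one]
    exact one_ne_zero
  rw [inv_eq_iff_mul_eq_one hfQ, ← map_mul, mul_comm, mul_invOfUnit Q 1 (by simp [hQ]), map_one]

end PowerSeries

section SchurStep

variable {R : Type*} [CommRing R] (σ : R →+* R)

noncomputable def schurStep (N : ℕ) (z : R) (cd : R[X] × R[X]) : R[X] × R[X] :=
  (cd.1 - C z * (X * (cd.2.map σ).reflect N), cd.2 + C z * (X * (cd.1.map σ).reflect N))

variable {σ} {N : ℕ} (z : R) {cd : R[X] × R[X]}

theorem natDegree_schurStep_le (hc : cd.1.natDegree ≤ N) (hd : cd.2.natDegree ≤ N) :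
    (schurStep σ N z cd).1.natDegree ≤ N + 1 ∧ (schurStep σ N z cd).2.natDegree ≤ N + 1 := by
  have hr : ∀ p : R[X], p.natDegree ≤ N →
      (C z * (X * (p.map σ).reflect N)).natDegree ≤ N + 1 :=
    fun p hp => (natDegree_C_mul_le _ _).trans <| natDegree_mul_le.trans <| by
      have := natDegree_reflect_le_of_le (natDegree_map_le (f := σ) |>.trans hp)
      have := natDegree_X_le (R := R)
      omega
  exact ⟨(natDegree_sub_le _ _).trans (max_le (by omega) (hr _ hd)),
    (natDegree_add_le _ _).trans (max_le (by omega) (hr _ hc))⟩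

theorem reflect_map_schurStep (hσ : Function.Involutive σ) (hc : cd.1.natDegree ≤ N)
    (hd : cd.2.natDegree ≤ N) :
    ((schurStep σ N z cd).1.map σ).reflect (N + 1)
        = X * (cd.1.map σ).reflect N - C (σ z) * cd.2 ∧
      ((schurStep σ N z cd).2.map σ).reflect (N + 1)
        = X * (cd.2.map σ).reflect N + C (σ z) * cd.1 := by
  have hmap : ∀ p : R[X], ((p.map σ).reflect N).map σ = p.reflect N := fun p => by
    rw [← reflect_map, map_map, show σ.comp σ = RingHom.id R from RingHom.ext hσ, map_id]
  have hX : ∀ q : R[X], q.natDegree ≤ N → (X * q.reflect N).reflect (N + 1) = q :=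
    fun q hq => by rw [reflect_X_mul_succ (natDegree_reflect_le_of_le hq), reflect_reflect]
  simp only [schurStep, Polynomial.map_sub, Polynomial.map_add, Polynomial.map_mul, map_C, map_X,
    hmap, reflect_sub, reflect_add, reflect_C_mul, hX _ hc, hX _ hd,
    reflect_succ (natDegree_map_le.trans hc), reflect_succ (natDegree_map_le.trans hd), and_self]

theorem schurStep_unitarity (hσ : Function.Involutive σ) (hc : cd.1.natDegree ≤ N)
    (hd : cd.2.natDegree ≤ N) :
    (schurStep σ N z cd).1 * ((schurStep σ N z cd).1.map σ).reflect (N + 1) +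
      (schurStep σ N z cd).2 * ((schurStep σ N z cd).2.map σ).reflect (N + 1)
      = C (1 + z * σ z) * X *
          (cd.1 * (cd.1.map σ).reflect N + cd.2 * (cd.2.map σ).reflect N) := by
  obtain ⟨h1, h2⟩ := reflect_map_schurStep z hσ hc hd
  rw [h1, h2, schurStep, map_add, map_one, map_mul]
  ring

theorem schurStep_cross :
    (schurStep σ N z cd).1 * cd.2 - cd.1 * (schurStep σ N z cd).2
      = -C z * X * (cd.1 * (cd.1.map σ).reflect N + cd.2 * (cd.2.map σ).reflect N) := by
  rw [schurStep]
  ring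

theorem coeff_zero_schurStep_snd : (schurStep σ N z cd).2.coeff 0 = cd.2.coeff 0 := by
  simp [schurStep]

theorem map_schurStep {S : Type*} [CommRing S] (f : R →+* S) {τ : S →+* S}
    (hf : ∀ x, f (σ x) = τ (f x)) :
    ((schurStep σ N z cd).1.map f, (schurStep σ N z cd).2.map f)
      = schurStep τ N (f z) (cd.1.map f, cd.2.map f) := by
  simp only [schurStep, Polynomial.map_sub, Polynomial.map_add, Polynomial.map_mul, map_C, map_X,
    reflect_map, map_map, show f.comp σ = τ.comp f from RingHom.ext hf]

theorem schurStep_C_mul {r : R} (hr : σ r = r) (c d : R[X]) :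
    schurStep σ N z (C r * c, C r * d)
      = (C r * (schurStep σ N z (c, d)).1, C r * (schurStep σ N z (c, d)).2) := by
  simp only [schurStep, Polynomial.map_mul, map_C, hr, reflect_C_mul, Prod.mk.injEq]
  constructor <;> ring

end SchurStep

section CDPair

variable (ζ : ℕ → ℂ)

noncomputable def scale (k : ℕ) : ℂ := ((Real.sqrt (1 + ‖ζ k‖ ^ 2))⁻¹ : ℝ)

noncomputable def scaleProd (N : ℕ) : ℂ := ∏ k ∈ Finset.range N, scale ζ (k + 1)

theorem scaleProd_succ (N : ℕ) : scaleProd ζ (N + 1) = scaleProd ζ N * scale ζ (N + 1) :=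
  Finset.prod_range_succ _ _

theorem conj_scale (k : ℕ) : conj (scale ζ k) = scale ζ k := Complex.conj_ofReal _

theorem inv_scale_sq (k : ℕ) : (scale ζ k ^ 2)⁻¹ = 1 + ((‖ζ k‖ ^ 2 : ℝ) : ℂ) := by
  rw [scale, ← Complex.ofReal_pow, inv_pow, Real.sq_sqrt (by positivity), Complex.ofReal_inv,
    inv_inv, Complex.ofReal_add, Complex.ofReal_one]

theorem scale_ne_zero (k : ℕ) : scale ζ k ≠ 0 :=
  Complex.ofReal_ne_zero.2 (by positivity)

theorem scale_sq_mul (k : ℕ) : scale ζ k ^ 2 * (1 + conj (ζ k) * ζ k) = 1 := by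
  have h := inv_scale_sq ζ k
  push_cast at h
  rw [Complex.conj_mul', ← h,
    mul_inv_cancel₀ (pow_ne_zero 2 (scale_ne_zero ζ k))]

theorem scaleProd_ne_zero (N : ℕ) : scaleProd ζ N ≠ 0 :=
  Finset.prod_ne_zero_iff.2 fun k _ => scale_ne_zero ζ (k + 1)

theorem inv_scaleProd_sq (N : ℕ) :
    (scaleProd ζ N ^ 2)⁻¹ = ∏ j ∈ Finset.range N, (1 + ((‖ζ (j + 1)‖ ^ 2 : ℝ) : ℂ)) := by
  simp only [scaleProd, ← Finset.prod_pow, ← Finset.prod_inv_distrib, inv_scale_sq]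

theorem cdPair_succ_of_natDegree_le {N : ℕ} (hc : (cdPair ζ N).1.natDegree ≤ N)
    (hd : (cdPair ζ N).2.natDegree ≤ N) :
    cdPair ζ (N + 1)
      = (C (scale ζ (N + 1)) * (schurStep conj N (conj (ζ (N + 1))) (cdPair ζ N)).1,
        C (scale ζ (N + 1)) * (schurStep conj N (conj (ζ (N + 1))) (cdPair ζ N)).2) := by
  rw [cdPair, sum_range_map_coeff_mul_X_pow_eq _ hc, sum_range_map_coeff_mul_X_pow_eq _ hd]
  rfl

theorem natDegree_cdPair_le (N : ℕ) :
    (cdPair ζ N).1.natDegree ≤ N ∧ (cdPair ζ N).2.natDegree ≤ N := by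
  induction N with
  | zero => simp [cdPair]
  | succ N ih =>
    rw [cdPair_succ_of_natDegree_le ζ ih.1 ih.2]
    obtain ⟨h1, h2⟩ := natDegree_schurStep_le (σ := conj) (conj (ζ (N + 1))) ih.1 ih.2
    exact ⟨(natDegree_C_mul_le _ _).trans h1, (natDegree_C_mul_le _ _).trans h2⟩

theorem cdPair_succ (N : ℕ) :
    cdPair ζ (N + 1)
      = (C (scale ζ (N + 1)) * (schurStep conj N (conj (ζ (N + 1))) (cdPair ζ N)).1,
        C (scale ζ (N + 1)) * (schurStep conj N (conj (ζ (N + 1))) (cdPair ζ N)).2) :=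
  cdPair_succ_of_natDegree_le ζ (natDegree_cdPair_le ζ N).1 (natDegree_cdPair_le ζ N).2

theorem cdPair_unitarity (N : ℕ) :
    (cdPair ζ N).1 * ((cdPair ζ N).1.map conj).reflect N
      + (cdPair ζ N).2 * ((cdPair ζ N).2.map conj).reflect N = X ^ N := by
  induction N with
  | zero => simp [cdPair]
  | succ N ih =>
    have h := schurStep_unitarity (conj (ζ (N + 1))) Complex.conj_conj
      (natDegree_cdPair_le ζ N).1 (natDegree_cdPair_le ζ N).2
    have ha : C (scale ζ (N + 1)) ^ 2 * C (1 + conj (ζ (N + 1)) * conj (conj (ζ (N + 1)))) = 1 := by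
      rw [Complex.conj_conj, ← C_pow, ← C_mul, scale_sq_mul, C_1]
    rw [ih] at h
    simp only [cdPair_succ, Polynomial.map_mul, map_C, conj_scale, reflect_C_mul]
    linear_combination C (scale ζ (N + 1)) ^ 2 * h + X * X ^ N * ha

theorem cdPair_cross (N : ℕ) :
    (cdPair ζ (N + 1)).1 * (cdPair ζ N).2 - (cdPair ζ N).1 * (cdPair ζ (N + 1)).2
      = -C (scale ζ (N + 1) * conj (ζ (N + 1))) * X ^ (N + 1) := by
  have h := schurStep_cross (σ := conj) (N := N) (conj (ζ (N + 1))) (cd := cdPair ζ N)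
  rw [cdPair_unitarity] at h
  rw [cdPair_succ, map_mul, pow_succ']
  linear_combination C (scale ζ (N + 1)) * h

theorem coeff_zero_cdPair_snd (N : ℕ) : (cdPair ζ N).2.coeff 0 = scaleProd ζ N := by
  induction N with
  | zero => simp [cdPair, scaleProd]
  | succ N ih =>
    rw [cdPair_succ, coeff_C_mul, coeff_zero_schurStep_snd, ih, scaleProd_succ, mul_comm]

theorem constantCoeff_cdPair_snd_ne_zero (N : ℕ) :
    PowerSeries.constantCoeff ((cdPair ζ N).2 : PowerSeries ℂ) ≠ 0 := by
  rw [Polynomial.constantCoeff_coe, coeff_zero_cdPair_snd]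
  exact scaleProd_ne_zero ζ N

noncomputable def cdRatio (N : ℕ) : PowerSeries ℂ :=
  ((cdPair ζ N).1 : PowerSeries ℂ) * ((cdPair ζ N).2 : PowerSeries ℂ)⁻¹

theorem cdRatio_succ (N : ℕ) :
    cdRatio ζ (N + 1) = cdRatio ζ N + PowerSeries.X ^ (N + 1) *
      (PowerSeries.C (-(scale ζ (N + 1) * conj (ζ (N + 1)))) *
        (((cdPair ζ N).2 : PowerSeries ℂ)⁻¹ * ((cdPair ζ (N + 1)).2 : PowerSeries ℂ)⁻¹)) := by
  have h := congrArg (fun p : ℂ[X] => (p : PowerSeries ℂ)) (cdPair_cross ζ N)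
  push_cast at h
  rw [← sub_eq_iff_eq_add', cdRatio, cdRatio, PowerSeries.mul_inv_sub_mul_inv
    (constantCoeff_cdPair_snd_ne_zero ζ N) (constantCoeff_cdPair_snd_ne_zero ζ (N + 1)), h,
    map_neg]
  ring

theorem coeff_cdRatio_succ_of_le {n N : ℕ} (h : n ≤ N) :
    PowerSeries.coeff n (cdRatio ζ (N + 1)) = PowerSeries.coeff n (cdRatio ζ N) := by
  rw [cdRatio_succ, map_add, PowerSeries.coeff_X_pow_mul', if_neg (by omega), add_zero]

theorem coeff_cdRatio_of_le {n N : ℕ} (h : n ≤ N) :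
    PowerSeries.coeff n (cdRatio ζ N) = PowerSeries.coeff n (cdRatio ζ n) := by
  induction N, h using Nat.le_induction with
  | base => rfl
  | succ N hN ih => rw [coeff_cdRatio_succ_of_le ζ hN, ih]

theorem coeff_succ_cdRatio_succ (N : ℕ) :
    PowerSeries.coeff (N + 1) (cdRatio ζ (N + 1))
      = PowerSeries.coeff (N + 1) (cdRatio ζ N) - conj (ζ (N + 1)) * (scaleProd ζ N ^ 2)⁻¹ := by
  rw [cdRatio_succ, map_add, PowerSeries.coeff_X_pow_mul', if_pos le_rfl, Nat.sub_self,
    PowerSeries.coeff_zero_eq_constantCoeff_apply]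
  simp only [map_mul, PowerSeries.constantCoeff_C, PowerSeries.constantCoeff_inv,
    Polynomial.constantCoeff_coe, coeff_zero_cdPair_snd, scaleProd_succ]
  have := scale_ne_zero ζ (N + 1)
  have := scaleProd_ne_zero ζ N
  field_simp
  ring

end CDPair

section Universal

def pairSwap (m : ℕ) (i : Fin (2 * m)) : Fin (2 * m) :=
  if h : i.val % 2 = 0 then ⟨i.val + 1, by omega⟩ else ⟨i.val - 1, by omega⟩

theorem pairSwap_val (m : ℕ) (i : Fin (2 * m)) :
    (pairSwap m i).val = if i.val % 2 = 0 then i.val + 1 else i.val - 1 := by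
  unfold pairSwap
  split_ifs <;> rfl

noncomputable def univConj (m : ℕ) :
    MvPolynomial (Fin (2 * m)) ℤ →+* MvPolynomial (Fin (2 * m)) ℤ :=
  (MvPolynomial.rename (pairSwap m)).toRingHom

noncomputable def univZetaConj (m N : ℕ) : MvPolynomial (Fin (2 * m)) ℤ :=
  if h : N < m then MvPolynomial.X ⟨2 * N + 1, by omega⟩ else 0

noncomputable def univCD (m : ℕ) :
    ℕ → (MvPolynomial (Fin (2 * m)) ℤ)[X] × (MvPolynomial (Fin (2 * m)) ℤ)[X]
  | 0 => (0, 1)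
  | N + 1 => schurStep (univConj m) N (univZetaConj m N) (univCD m N)

theorem coeff_zero_univCD_snd (m N : ℕ) : (univCD m N).2.coeff 0 = 1 := by
  induction N with
  | zero => simp [univCD]
  | succ N ih => rw [univCD, coeff_zero_schurStep_snd, ih]

noncomputable def univRatio (m : ℕ) : PowerSeries (MvPolynomial (Fin (2 * m)) ℤ) :=
  ((univCD m m).1 : PowerSeries _) * PowerSeries.invOfUnit ((univCD m m).2 : PowerSeries _) 1

def zetaVals (m : ℕ) (ζ : ℕ → ℂ) (i : Fin (2 * m)) : ℂ :=
  if i.val % 2 = 0 then ζ (i.val / 2 + 1) else conj (ζ (i.val / 2 + 1))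

theorem zetaVals_pairSwap (m : ℕ) (ζ : ℕ → ℂ) (i : Fin (2 * m)) :
    zetaVals m ζ (pairSwap m i) = conj (zetaVals m ζ i) := by
  unfold zetaVals
  rw [pairSwap_val]
  split_ifs with h₁ h₂ h₂
  · omega
  · rw [show (i.val + 1) / 2 = i.val / 2 by omega]
  · rw [show (i.val - 1) / 2 = i.val / 2 by omega, Complex.conj_conj]
  · omega

noncomputable def zetaEval (m : ℕ) (ζ : ℕ → ℂ) : MvPolynomial (Fin (2 * m)) ℤ →+* ℂ :=
  (MvPolynomial.aeval (zetaVals m ζ)).toRingHom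

theorem zetaEval_univConj (m : ℕ) (ζ : ℕ → ℂ) (x : MvPolynomial (Fin (2 * m)) ℤ) :
    zetaEval m ζ (univConj m x) = conj (zetaEval m ζ x) := by
  have h := congrArg (· x)
    (MvPolynomial.comp_aeval (R := ℤ) (zetaVals m ζ) (starRingEnd ℂ).toIntAlgHom)
  have hv : zetaVals m ζ ∘ pairSwap m = fun i => conj (zetaVals m ζ i) :=
    funext (zetaVals_pairSwap m ζ)
  simp only [AlgHom.comp_apply, RingHom.toIntAlgHom_apply] at h
  simp only [zetaEval, univConj, AlgHom.toRingHom_eq_coe, RingHom.coe_coe,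
    MvPolynomial.aeval_rename, hv, h]

theorem zetaEval_univZetaConj {m N : ℕ} (ζ : ℕ → ℂ) (h : N < m) :
    zetaEval m ζ (univZetaConj m N) = conj (ζ (N + 1)) := by
  rw [univZetaConj, dif_pos h, zetaEval, AlgHom.toRingHom_eq_coe, RingHom.coe_coe,
    MvPolynomial.aeval_X, zetaVals]
  simp only
  rw [if_neg (by omega), show (2 * N + 1) / 2 = N by omega]

theorem cdPair_eq_C_mul_map {m N : ℕ} (ζ : ℕ → ℂ) (h : N ≤ m) :
    cdPair ζ N = (C (scaleProd ζ N) * (univCD m N).1.map (zetaEval m ζ),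
      C (scaleProd ζ N) * (univCD m N).2.map (zetaEval m ζ)) := by
  induction N with
  | zero => simp [cdPair, univCD, scaleProd]
  | succ N ih =>
    have hmap := map_schurStep (N := N) (univZetaConj m N) (cd := univCD m N) (zetaEval m ζ)
      (zetaEval_univConj m ζ)
    rw [zetaEval_univZetaConj ζ (by omega)] at hmap
    have hP : conj (scaleProd ζ N) = scaleProd ζ N := by
      simp only [scaleProd, map_prod, conj_scale]
    rw [cdPair_succ, ih (by omega), schurStep_C_mul _ hP, ← hmap, univCD, scaleProd_succ, C_mul]
    ext1 <;> dsimp only <;> ring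

theorem cdRatio_eq_map_univRatio (m : ℕ) (ζ : ℕ → ℂ) :
    cdRatio ζ m = PowerSeries.map (zetaEval m ζ) (univRatio m) := by
  have hC : PowerSeries.C (scaleProd ζ m) * PowerSeries.C (scaleProd ζ m)⁻¹ = 1 := by
    rw [← map_mul, mul_inv_cancel₀ (scaleProd_ne_zero ζ m), map_one]
  rw [cdRatio, cdPair_eq_C_mul_map ζ le_rfl, univRatio, map_mul,
    ← PowerSeries.inv_map_eq_map_invOfUnit _ (by simp [coeff_zero_univCD_snd])]
  simp only [Polynomial.coe_mul, Polynomial.coe_C, Polynomial.polynomial_map_coe,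
    PowerSeries.mul_inv_rev, PowerSeries.C_inv]
  linear_combination (PowerSeries.map (zetaEval m ζ) ↑(univCD m m).1 *
    (PowerSeries.map (zetaEval m ζ) (univCD m m).2)⁻¹) * hC

end Universal

/-- For every `n ≥ 1` there is an integer polynomial `p` in `2(n−1)` variables, depending
only on `n`, such that for every sequence `ζ` and every `N ≥ n`, the `n`-th Taylor
coefficient at `0` of `c_N / d_N` (well defined since `d_N(0) ≠ 0`; formally, the `n`-th
coefficient of the power series `c_N · d_N⁻¹`) equals
`−conj(ζ_n)·Π_{j=1}^{n−1}(1+|ζ_j|²) + p(ζ₁, conj ζ₁, …, ζ_{n−1}, conj ζ_{n−1})`. -/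
theorem stmt3 (n : ℕ) (hn : 1 ≤ n) :
    ∃ p : MvPolynomial (Fin (2 * (n - 1))) ℤ,
      ∀ (ζ : ℕ → ℂ) (N : ℕ), n ≤ N →
        (PowerSeries.coeff (R := ℂ) n)
            (((cdPair ζ N).1 : PowerSeries ℂ) * ((cdPair ζ N).2 : PowerSeries ℂ)⁻¹)
          = -(starRingEnd ℂ (ζ n)) *
              (∏ j ∈ Finset.range (n - 1), ((1 : ℂ) + (‖ζ (j + 1)‖ ^ 2 : ℝ)))
            + MvPolynomial.aeval
                (fun i : Fin (2 * (n - 1)) =>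
                  if i.val % 2 = 0 then ζ (i.val / 2 + 1)
                  else starRingEnd ℂ (ζ (i.val / 2 + 1))) p := by
  obtain ⟨m, rfl⟩ : ∃ m, n = m + 1 := ⟨n - 1, by omega⟩
  refine ⟨PowerSeries.coeff (m + 1) (univRatio m), fun ζ N hN => ?_⟩
  change PowerSeries.coeff (m + 1) (cdRatio ζ N) = _
  rw [coeff_cdRatio_of_le ζ hN, coeff_succ_cdRatio_succ, cdRatio_eq_map_univRatio,
    PowerSeries.coeff_map, inv_scaleProd_sq, sub_eq_neg_add, neg_mul]
  rfl
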